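/- Consider the financial system on banks {1,…,8} with external assets e 2 = e 7 = 1/2 and e i = 0 for all other i, debt contracts of notional 1: 2→3, 3→4, 6→5, 7→6, and two CDSes of notional 1: one with debtor 2, creditor 1, reference bank 6, and one with debtor 7, creditor 8, reference bank 3 (all other notionals are 0). Then this system has exactly one clearing vector r, and it satisfies r 2 = r 3 = r 6 = r 7 = 1 − √2/2 and r 1 = r 4 = r 5 = r 8 = 1; in particular r 2 is irrational. -/

import Mathlib

/-!
Banks 1, 4, 5, 8 owe nothing, so they recover fully. Banks 3 and 6 owe one unit each and their only
asset is the payment of banks 2 and 7 respectively, so `r 3 = r 2` and `r 6 = r 7`. Each CDS makes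
the liability of its writer depend on the other chain: writing `x = r 2` and `y = r 7`, bank 2 owes
`2 - y` and bank 7 owes `2 - x` against assets `1/2`, so `x (2 - y) = y (2 - x) = 1/2`. Subtracting
gives `x = y`, and then `(1 - x)² = 1/2` forces `x = 1 - √2/2`.
-/

open Finset

/-- The liability of bank `i` to bank `j` under recovery-rate vector `r`. -/
def liab {n : ℕ} (c : Fin n → Fin n → ℝ) (cds : Fin n → Fin n → Fin n → ℝ)
    (r : Fin n → ℝ) (i j : Fin n) : ℝ :=
  c i j + ∑ R : Fin n, (1 - r R) * cds i j R

/-- The total liability of bank `i` under recovery-rate vector `r`. -/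
def totLiab {n : ℕ} (c : Fin n → Fin n → ℝ) (cds : Fin n → Fin n → Fin n → ℝ)
    (r : Fin n → ℝ) (i : Fin n) : ℝ :=
  ∑ j : Fin n, liab c cds r i j

/-- The assets of bank `i` under recovery-rate vector `r`
(external assets plus incoming payments `p j i r = r j * liab c cds r j i`). -/
def assets {n : ℕ} (e : Fin n → ℝ) (c : Fin n → Fin n → ℝ)
    (cds : Fin n → Fin n → Fin n → ℝ) (r : Fin n → ℝ) (i : Fin n) : ℝ :=
  e i + ∑ j : Fin n, r j * liab c cds r j i

/-- `r` is a clearing recovery-rate vector. -/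
def IsClearing {n : ℕ} (e : Fin n → ℝ) (c : Fin n → Fin n → ℝ)
    (cds : Fin n → Fin n → Fin n → ℝ) (r : Fin n → ℝ) : Prop :=
  (∀ i, 0 ≤ r i ∧ r i ≤ 1) ∧
  ∀ i, (0 < totLiab c cds r i →
          r i = min 1 (assets e c cds r i / totLiab c cds r i)) ∧
       (totLiab c cds r i = 0 → r i = 1)

/-- `(e, c, cds)` is a financial system. -/
def IsFinSys {n : ℕ} (e : Fin n → ℝ) (c : Fin n → Fin n → ℝ)
    (cds : Fin n → Fin n → Fin n → ℝ) : Prop :=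
  (∀ i, 0 ≤ e i) ∧ (∀ i j, 0 ≤ c i j) ∧ (∀ i, c i i = 0) ∧
  (∀ i j R, 0 ≤ cds i j R) ∧
  (∀ i j R, ¬(i ≠ j ∧ i ≠ R ∧ j ≠ R) → cds i j R = 0)

/-- External assets of the 8-bank example (banks 1..8 are indices 0..7):
banks 2 and 7 hold 1/2. -/
noncomputable def eEx : Fin 8 → ℝ := fun i => if i = 1 ∨ i = 6 then 1/2 else 0

/-- Debt contracts of the 8-bank example: 2→3, 3→4, 6→5, 7→6, each of notional 1. -/
noncomputable def cEx : Fin 8 → Fin 8 → ℝ := fun i j =>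
  if (i = 1 ∧ j = 2) ∨ (i = 2 ∧ j = 3) ∨ (i = 5 ∧ j = 4) ∨ (i = 6 ∧ j = 5) then 1 else 0

/-- CDSes of the 8-bank example: (debtor 2, creditor 1, reference 6) and
(debtor 7, creditor 8, reference 3), each of notional 1. -/
noncomputable def cdsEx : Fin 8 → Fin 8 → Fin 8 → ℝ := fun i j R =>
  if (i = 1 ∧ j = 0 ∧ R = 5) ∨ (i = 6 ∧ j = 7 ∧ R = 2) then 1 else 0

section Clearing

variable {n : ℕ} {e : Fin n → ℝ} {c : Fin n → Fin n → ℝ} {cds : Fin n → Fin n → Fin n → ℝ}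
  {r : Fin n → ℝ}

lemma eq_min_one_div_iff_mul_eq {x a L : ℝ} (hL : 0 < L) (ha : a ≤ L) :
    x = min 1 (a / L) ↔ x * L = a := by
  rw [min_eq_right ((div_le_one hL).2 ha), eq_div_iff hL.ne']

lemma IsClearing.mul_eq_of_totLiab_eq (h : IsClearing e c cds r) {i : Fin n} {L a : ℝ}
    (hL : totLiab c cds r i = L) (ha : assets e c cds r i = a) (hpos : 0 < L) (hle : a ≤ L) :
    r i * L = a := by
  subst hL ha
  exact (eq_min_one_div_iff_mul_eq hpos hle).1 ((h.2 i).1 hpos)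

lemma isClearing_of_forall (hr : ∀ i, 0 ≤ r i ∧ r i ≤ 1)
    (h : ∀ i, (totLiab c cds r i = 0 ∧ r i = 1) ∨
      (0 < totLiab c cds r i ∧ assets e c cds r i ≤ totLiab c cds r i ∧
        r i * totLiab c cds r i = assets e c cds r i)) :
    IsClearing e c cds r := by
  refine ⟨hr, fun i => ?_⟩
  rcases h i with ⟨hL, hri⟩ | ⟨hL, ha, hri⟩
  · exact ⟨fun hpos => absurd hL hpos.ne', fun _ => hri⟩
  · exact ⟨fun _ => (eq_min_one_div_iff_mul_eq hL ha).2 hri, fun h0 => absurd h0 hL.ne'⟩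

end Clearing

lemma mul_two_sub_self_eq_half_iff {x : ℝ} (hx : x ≤ 1) :
    x * (2 - x) = 1 / 2 ↔ x = 1 - √2 / 2 := by
  have hsq : (√2 / 2) ^ 2 = 1 / 2 := by
    rw [div_pow, Real.sq_sqrt zero_le_two]; norm_num
  have key : x * (2 - x) = 1 / 2 ↔ (1 - x) ^ 2 = (√2 / 2) ^ 2 := by
    rw [hsq]; constructor <;> intro h <;> linarith
  rw [key, pow_left_inj₀ (by linarith) (by positivity) two_ne_zero]
  constructor <;> intro h <;> linarith

lemma irrational_one_sub_sqrt_two_div_two : Irrational (1 - √2 / 2) := by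
  simpa using (irrational_sqrt_two.div_natCast two_ne_zero).ratCast_sub 1

lemma totLiab_ex (r : Fin 8 → ℝ) :
    totLiab cEx cdsEx r = ![0, 2 - r 5, 1, 0, 0, 1, 2 - r 2, 0] := by
  funext i
  fin_cases i <;> simp [totLiab, liab, cEx, cdsEx, Fin.sum_univ_eight] <;> ring

lemma assets_ex (r : Fin 8 → ℝ) :
    assets eEx cEx cdsEx r =
      ![r 1 * (1 - r 5), 1 / 2, r 1, r 2, r 5, r 6, 1 / 2, r 6 * (1 - r 2)] := by
  funext i
  fin_cases i <;> simp [assets, liab, eEx, cEx, cdsEx, Fin.sum_univ_eight]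

noncomputable def rEx : Fin 8 → ℝ :=
  ![1, 1 - √2 / 2, 1 - √2 / 2, 1, 1, 1 - √2 / 2, 1 - √2 / 2, 1]

lemma IsClearing.eq_rEx {r : Fin 8 → ℝ} (h : IsClearing eEx cEx cdsEx r) : r = rEx := by
  have hL := congrFun (totLiab_ex r)
  have ha := congrFun (assets_ex r)
  have hr := h.1
  have h_one : ∀ i, totLiab cEx cdsEx r i = 0 → r i = 1 := fun i => (h.2 i).2
  have h2 : r 2 = r 1 := by simpa using h.mul_eq_of_totLiab_eq (hL 2) (ha 2) one_pos (hr 1).2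
  have h5 : r 5 = r 6 := by simpa using h.mul_eq_of_totLiab_eq (hL 5) (ha 5) one_pos (hr 6).2
  have e1 : r 1 * (2 - r 5) = 1 / 2 :=
    h.mul_eq_of_totLiab_eq (hL 1) (ha 1) (by linarith [(hr 5).2]) (by linarith [(hr 5).2])
  have e6 : r 6 * (2 - r 2) = 1 / 2 :=
    h.mul_eq_of_totLiab_eq (hL 6) (ha 6) (by linarith [(hr 2).2]) (by linarith [(hr 2).2])
  rw [h5] at e1
  rw [h2] at e6
  have h16 : r 1 = r 6 := by linear_combination (e1 - e6) / 2
  have ht : r 1 = 1 - √2 / 2 := (mul_two_sub_self_eq_half_iff (hr 1).2).1 (h16 ▸ e1)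
  funext i
  fin_cases i <;> simp [rEx, h_one, hL, h2, h5, ← h16, ht]

lemma isClearing_rEx : IsClearing eEx cEx cdsEx rEx := by
  have hs : √2 < 2 := by rw [Real.sqrt_lt' two_pos]; norm_num
  have h0 : 0 ≤ 1 - √2 / 2 := by linarith
  have h1 : 1 - √2 / 2 ≤ 1 := by linarith [Real.sqrt_nonneg 2]
  have hpos : 0 < 2 - (1 - √2 / 2) := by linarith
  have hle : 2⁻¹ ≤ 2 - (1 - √2 / 2) := by linarith
  have hmul := (mul_two_sub_self_eq_half_iff h1).2 rfl
  refine isClearing_of_forall (fun i => ?_) (fun i => ?_)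
  · fin_cases i <;> simp [rEx, h0, h1]
  · fin_cases i <;> simp [rEx, totLiab_ex, assets_ex, h1, hpos, hle, hmul]

/-- The 8-bank example has exactly one clearing vector; it has
`r 2 = r 3 = r 6 = r 7 = 1 - √2/2` (irrational) and `r 1 = r 4 = r 5 = r 8 = 1`. -/
theorem eight_bank_irrational_clearing :
    (∃! r : Fin 8 → ℝ, IsClearing eEx cEx cdsEx r) ∧
    ∀ r : Fin 8 → ℝ, IsClearing eEx cEx cdsEx r →
      r 1 = 1 - Real.sqrt 2 / 2 ∧ r 2 = 1 - Real.sqrt 2 / 2 ∧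
      r 5 = 1 - Real.sqrt 2 / 2 ∧ r 6 = 1 - Real.sqrt 2 / 2 ∧
      r 0 = 1 ∧ r 3 = 1 ∧ r 4 = 1 ∧ r 7 = 1 ∧ Irrational (r 1) := by
  refine ⟨⟨rEx, isClearing_rEx, fun r hr => hr.eq_rEx⟩, fun r hr => ?_⟩
  obtain rfl := hr.eq_rEx
  simpa [rEx] using irrational_one_sub_sqrt_two_div_two
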